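/- Let H be an N×M complex matrix, σ² > 0, and D an M×M Hermitian positive semidefinite matrix. If there exists a vector v ∈ ℂ^M with D v = 0 and H v ≠ 0, then the supremum over all M×M Hermitian positive semidefinite matrices S of log₂ det(I_N + (1/σ²) H S Hᴴ) − tr(D S) is +∞; in particular, along S_t = t v vᴴ the objective equals log₂(1 + (t/σ²)‖Hv‖²) and tends to +∞. -/

import Mathlib

open Matrix ComplexOrder

/-- The Lagrangian-style objective `log₂ det(I_N + (1/σ²) H S Hᴴ) − tr(D S)`. -/
noncomputable def dualObj {N M : ℕ} (H : Matrix (Fin N) (Fin M) ℂ) (σ2 : ℝ)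
    (D : Matrix (Fin M) (Fin M) ℂ) (S : Matrix (Fin M) (Fin M) ℂ) : ℝ :=
  Real.logb 2 ((1 + σ2⁻¹ • (H * S * Hᴴ)).det.re) - ((D * S).trace).re

namespace Matrix

theorem det_one_add_vecMulVec {m α : Type*} [Fintype m] [DecidableEq m] [CommRing α]
    (u v : m → α) : det (1 + vecMulVec u v) = 1 + v ⬝ᵥ u := by
  rw [vecMulVec_eq Unit, det_one_add_replicateCol_mul_replicateRow]

theorem mul_vecMulVec_star_mul_conjTranspose {l m α : Type*} [Fintype m] [Semiring α]
    [StarRing α] (H : Matrix l m α) (v : m → α) :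
    H * vecMulVec v (star v) * Hᴴ = vecMulVec (H *ᵥ v) (star (H *ᵥ v)) := by
  rw [mul_vecMulVec, vecMulVec_mul, star_mulVec]

end Matrix

theorem dualObj_smul_vecMulVec_star {N M : ℕ} (H : Matrix (Fin N) (Fin M) ℂ) (σ2 : ℝ)
    {D : Matrix (Fin M) (Fin M) ℂ} {v : Fin M → ℂ} (hv0 : D *ᵥ v = 0) (t : ℝ) :
    dualObj H σ2 D (t • vecMulVec v (star v)) =
      Real.logb 2 (1 + t / σ2 * (star (H *ᵥ v) ⬝ᵥ H *ᵥ v).re) := by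
  set w := H *ᵥ v
  have hpenalty : D * (t • vecMulVec v (star v)) = 0 := by
    rw [Matrix.mul_smul, mul_vecMulVec, hv0, zero_vecMulVec, smul_zero]
  have hupdate : σ2⁻¹ • (H * (t • vecMulVec v (star v)) * Hᴴ) =
      vecMulVec ((σ2⁻¹ * t) • w) (star w) := by
    rw [Matrix.mul_smul, Matrix.smul_mul, mul_vecMulVec_star_mul_conjTranspose, smul_smul,
      smul_vecMulVec]
  rw [dualObj, hpenalty, hupdate, det_one_add_vecMulVec, dotProduct_smul, trace_zero,
    Complex.zero_re, sub_zero, Complex.add_re, Complex.one_re, Complex.smul_re, smul_eq_mul,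
    div_eq_inv_mul]

theorem stmt_2_general {N M : ℕ} (H : Matrix (Fin N) (Fin M) ℂ) (σ2 : ℝ) (hσ2 : 0 < σ2)
    (D : Matrix (Fin M) (Fin M) ℂ)
    (v : Fin M → ℂ) (hv0 : D.mulVec v = 0) (hHv : H.mulVec v ≠ 0) :
    (∀ B : ℝ, ∃ S : Matrix (Fin M) (Fin M) ℂ, S.PosSemidef ∧ B < dualObj H σ2 D S) ∧
      (∀ t : ℝ, 0 ≤ t →
        dualObj H σ2 D (t • vecMulVec v (star v)) =
          Real.logb 2 (1 + t / σ2 * (star (H.mulVec v) ⬝ᵥ H.mulVec v).re)) ∧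
      Filter.Tendsto (fun t : ℝ => dualObj H σ2 D (t • vecMulVec v (star v)))
        Filter.atTop Filter.atTop := by
  have hnorm : 0 < (star (H *ᵥ v) ⬝ᵥ H *ᵥ v).re :=
    (Complex.lt_def.mp (dotProduct_star_self_pos_iff.mpr hHv)).1
  have htend : Filter.Tendsto (fun t : ℝ => dualObj H σ2 D (t • vecMulVec v (star v)))
      Filter.atTop Filter.atTop := by
    simp_rw [dualObj_smul_vecMulVec_star H σ2 hv0]
    exact (Real.tendsto_logb_atTop one_lt_two).comp <| Filter.tendsto_atTop_add_const_left _ _ <|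
      (Filter.tendsto_id.atTop_div_const hσ2).atTop_mul_const hnorm
  refine ⟨fun B => ?_, fun t _ => dualObj_smul_vecMulVec_star H σ2 hv0 t, htend⟩
  obtain ⟨t, hBt, ht⟩ := ((htend.eventually_gt_atTop B).and (Filter.eventually_ge_atTop 0)).exists
  exact ⟨_, (posSemidef_vecMulVec_self_star v).smul ht, hBt⟩

/-- if `D ⪰ 0` has a kernel vector `v` with `H v ≠ 0`, the supremum of the
objective over PSD matrices is `+∞`; along `S_t = t v vᴴ` (t ≥ 0) the objective equals
`log₂(1 + (t/σ²)‖Hv‖²)` and tends to `+∞`. -/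
theorem stmt_2 {N M : ℕ} (H : Matrix (Fin N) (Fin M) ℂ) (σ2 : ℝ) (hσ2 : 0 < σ2)
    (D : Matrix (Fin M) (Fin M) ℂ) (hD : D.PosSemidef)
    (v : Fin M → ℂ) (hv0 : D.mulVec v = 0) (hHv : H.mulVec v ≠ 0) :
    (∀ B : ℝ, ∃ S : Matrix (Fin M) (Fin M) ℂ, S.PosSemidef ∧ B < dualObj H σ2 D S) ∧
      (∀ t : ℝ, 0 ≤ t →
        dualObj H σ2 D (t • vecMulVec v (star v)) =
          Real.logb 2 (1 + t / σ2 * (star (H.mulVec v) ⬝ᵥ H.mulVec v).re)) ∧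
      Filter.Tendsto (fun t : ℝ => dualObj H σ2 D (t • vecMulVec v (star v)))
        Filter.atTop Filter.atTop :=
  stmt_2_general H σ2 hσ2 D v hv0 hHv
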